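/- Let K be a field, n : ℕ, b : Fin n → ℕ, Γ a group, and ρ : Γ →* GL_n(K) a group homomorphism such that for every γ ∈ Γ the matrix ρ(γ) is block upper triangular (ρ(γ) i j = 0 whenever b j < b i). Assume ρ is semisimple: every subspace W of K^n = (Fin n → K) that is invariant under all ρ(γ) (acting by matrix-vector multiplication) admits a complement that is also invariant under all ρ(γ). Then there exists a strictly-upper block unipotent matrix u ∈ GL_n(K) such that for every γ ∈ Γ, u · ρ(γ) · u⁻¹ equals the block diagonal part D(ρ(γ)). -/

import Mathlib

open scoped Matrix

/-!
Let `F t` be the subspace of vectors supported on the blocks below `t`; block triangularity makes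
it invariant, so semisimplicity provides an invariant complement `C t`. Splitting the basis vector
`e_j` along `F (b j) ⊕ C (b j)` gives `w_j ∈ C (b j)` with `w_j - e_j` supported on lower
blocks, so the matrix `W` with columns `w_j` is strictly-upper block unipotent. For every `γ`,
column `j` of `ρ γ * W - W * D (ρ γ)` lies in `C (b j)` by invariance and in `F (b j)` by block
triangularity, hence vanishes; thus `u = W⁻¹` conjugates `ρ γ` to `D (ρ γ)`.
-/

/-- A matrix is strictly-upper block unipotent if it is `1 + N` with `N` supported on the
entries `(i,j)` with `b i < b j`. -/
def IsStrictUpperUnip {K : Type*} [Zero K] [One K] [Add K] {n : ℕ} (b : Fin n → ℕ)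
    (M : Matrix (Fin n) (Fin n) K) : Prop :=
  ∃ N : Matrix (Fin n) (Fin n) K, (∀ i j, ¬ b i < b j → N i j = 0) ∧ M = 1 + N

namespace Matrix

variable {ι α R : Type*} [LinearOrder α] {b : ι → α}

def StrictBlockTriangular [Zero R] (M : Matrix ι ι R) (b : ι → α) : Prop :=
  ∀ ⦃i j⦄, b j ≤ b i → M i j = 0

def blockDiagPart [Zero R] (M : Matrix ι ι R) (b : ι → α) : Matrix ι ι R :=
  of fun i j => if b i = b j then M i j else 0

section Algebra

variable {M N : Matrix ι ι R}

theorem StrictBlockTriangular.blockTriangular [Zero R] (hM : M.StrictBlockTriangular b) :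
    M.BlockTriangular b :=
  fun _ _ hji => hM hji.le

theorem StrictBlockTriangular.add [AddZeroClass R] (hM : M.StrictBlockTriangular b)
    (hN : N.StrictBlockTriangular b) : (M + N).StrictBlockTriangular b :=
  fun _ _ hji => by simp [hM hji, hN hji]

theorem StrictBlockTriangular.sub [SubNegZeroMonoid R] (hM : M.StrictBlockTriangular b)
    (hN : N.StrictBlockTriangular b) : (M - N).StrictBlockTriangular b :=
  fun _ _ hji => by simp [hM hji, hN hji]

theorem StrictBlockTriangular.neg [NegZeroClass R] (hM : M.StrictBlockTriangular b) :
    (-M).StrictBlockTriangular b :=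
  fun _ _ hji => by simp [hM hji]

theorem StrictBlockTriangular.mul_blockTriangular [Fintype ι] [NonUnitalNonAssocSemiring R]
    (hM : M.StrictBlockTriangular b) (hN : N.BlockTriangular b) :
    (M * N).StrictBlockTriangular b := by
  intro i j hji
  rw [mul_apply]
  refine Finset.sum_eq_zero fun k _ => ?_
  rcases le_or_gt (b k) (b i) with hki | hik
  · rw [hM hki, zero_mul]
  · rw [hN (hji.trans_lt hik), mul_zero]

theorem BlockTriangular.mul_strictBlockTriangular [Fintype ι] [NonUnitalNonAssocSemiring R]
    (hM : M.BlockTriangular b) (hN : N.StrictBlockTriangular b) :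
    (M * N).StrictBlockTriangular b := by
  intro i j hji
  rw [mul_apply]
  refine Finset.sum_eq_zero fun k _ => ?_
  rcases le_or_gt (b j) (b k) with hjk | hkj
  · rw [hN hjk, mul_zero]
  · rw [hM (hkj.trans_le hji), zero_mul]

theorem blockTriangular_blockDiagPart [Zero R] (M : Matrix ι ι R) :
    (M.blockDiagPart b).BlockTriangular b :=
  fun _ _ hji => if_neg hji.ne'

theorem BlockTriangular.strictBlockTriangular_sub_blockDiagPart [AddGroup R]
    (hM : M.BlockTriangular b) : (M - M.blockDiagPart b).StrictBlockTriangular b := by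
  intro i j hji
  rcases hji.lt_or_eq with hlt | heq
  · simp [blockDiagPart, hM hlt, hlt.ne']
  · simp [blockDiagPart, heq]

variable [Fintype ι] [DecidableEq ι] [CommRing R]

theorem StrictBlockTriangular.isUnit_one_add (hN : N.StrictBlockTriangular b) :
    IsUnit (1 + N) := by
  have hblock : ∀ a, (1 + N).toSquareBlock b a = 1 := by
    intro a
    ext ⟨i, hi⟩ ⟨j, hj⟩
    simp [toSquareBlock_def, hN (hj.trans hi.symm).le, one_apply, Subtype.ext_iff]
  rw [isUnit_iff_isUnit_det, (blockTriangular_one.add hN.blockTriangular).det]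
  simp [hblock]

theorem StrictBlockTriangular.inv_one_add_sub_one (hN : N.StrictBlockTriangular b) :
    ((1 + N)⁻¹ - 1).StrictBlockTriangular b := by
  have hdet := (isUnit_iff_isUnit_det _).mp hN.isUnit_one_add
  have := invertibleOfIsUnitDet _ hdet
  have hinv : ((1 + N)⁻¹).BlockTriangular b :=
    blockTriangular_inv_of_blockTriangular (blockTriangular_one.add hN.blockTriangular)
  have hright : (1 + N)⁻¹ + N * (1 + N)⁻¹ = 1 := by
    rw [← one_add_mul, mul_nonsing_inv _ hdet]
  have hsub : (1 + N)⁻¹ - 1 = -(N * (1 + N)⁻¹) :=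
    eq_neg_of_add_eq_zero_left (by rw [sub_add_eq_add_sub, hright, sub_self])
  rw [hsub]
  exact (hN.mul_blockTriangular hinv).neg

end Algebra

theorem StrictBlockTriangular.isStrictUpperUnip_one_add {K : Type*} [Zero K] [One K] [Add K]
    {n : ℕ} {b : Fin n → ℕ} {N : Matrix (Fin n) (Fin n) K} (hN : N.StrictBlockTriangular b) :
    IsStrictUpperUnip b (1 + N) :=
  ⟨N, fun _ _ hij => hN (not_lt.mp hij), rfl⟩

end Matrix

open Matrix

section Filtration

variable {ι α R : Type*} [LinearOrder α] {b : ι → α}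

variable (R) in
def blockFiltration [Semiring R] (b : ι → α) (t : α) : Submodule R (ι → R) where
  carrier := {v | ∀ i, t ≤ b i → v i = 0}
  add_mem' hv hw i hi := by simp [hv i hi, hw i hi]
  zero_mem' _ _ := rfl
  smul_mem' c v hv i hi := by simp [hv i hi]

theorem Matrix.BlockTriangular.mulVec_mem_blockFiltration [Fintype ι] [Semiring R]
    {M : Matrix ι ι R} (hM : M.BlockTriangular b) {t : α} {v : ι → R}
    (hv : v ∈ blockFiltration R b t) : M *ᵥ v ∈ blockFiltration R b t := by
  intro i hi
  simp only [mulVec, dotProduct]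
  refine Finset.sum_eq_zero fun j _ => ?_
  rcases lt_or_ge (b j) t with hj | hj
  · rw [hM (hj.trans_le hi), zero_mul]
  · rw [hv j hj, mul_zero]

theorem Matrix.strictBlockTriangular_iff_col_mem [Semiring R] {M : Matrix ι ι R} :
    M.StrictBlockTriangular b ↔ ∀ j, M.col j ∈ blockFiltration R b (b j) :=
  ⟨fun hM _ _ hi => hM hi, fun hM i j hji => hM j i hji⟩

theorem exists_strictBlockTriangular_col_one_add_mem [DecidableEq ι] [Ring R]
    {C : α → Submodule R (ι → R)} (hC : ∀ t, Codisjoint (blockFiltration R b t) (C t)) :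
    ∃ E : Matrix ι ι R, E.StrictBlockTriangular b ∧ ∀ j, (1 + E).col j ∈ C (b j) := by
  choose y z hy hz hyz using fun j => Submodule.codisjoint_iff_exists_add_eq.mp (hC (b j))
    (Pi.single j 1)
  refine ⟨-(of y)ᵀ, strictBlockTriangular_iff_col_mem.mpr fun j => neg_mem (hy j), fun j => ?_⟩
  have hcol : (1 + -(of y)ᵀ).col j = Pi.single j 1 - y j := by
    ext i
    simp [one_apply, Pi.single_apply, sub_eq_add_neg, eq_comm]
  rw [hcol, ← hyz j, add_sub_cancel_left]
  exact hz j

theorem mul_one_add_eq_one_add_mul_blockDiagPart [Fintype ι] [DecidableEq ι] [CommRing R]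
    {C : α → Submodule R (ι → R)} (hC : ∀ t, Disjoint (blockFiltration R b t) (C t))
    {E : Matrix ι ι R} (hE : E.StrictBlockTriangular b) (hEC : ∀ j, (1 + E).col j ∈ C (b j))
    {A : Matrix ι ι R} (hA : A.BlockTriangular b) (hAC : ∀ t, ∀ v ∈ C t, A *ᵥ v ∈ C t) :
    A * (1 + E) = (1 + E) * A.blockDiagPart b := by
  set X := A * (1 + E) - (1 + E) * A.blockDiagPart b
  have hX : X.StrictBlockTriangular b := by
    have : X = (A - A.blockDiagPart b) + (A * E - E * A.blockDiagPart b) := by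
      simp only [X, mul_add, add_mul, mul_one, one_mul]
      abel
    rw [this]
    exact hA.strictBlockTriangular_sub_blockDiagPart.add
      ((hA.mul_strictBlockTriangular hE).sub
        (hE.mul_blockTriangular (blockTriangular_blockDiagPart A)))
  have hXC : ∀ j, X.col j ∈ C (b j) := by
    intro j
    have hcol : X.col j = A *ᵥ (1 + E).col j -
        ∑ k, A.blockDiagPart b k j • (1 + E).col k := by
      ext i
      simp [X, mul_apply, mulVec, dotProduct, Finset.sum_apply, mul_comm]
    rw [hcol]
    refine sub_mem (hAC _ _ (hEC j)) (Submodule.sum_mem _ fun k _ => ?_)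
    by_cases hkj : b k = b j
    · exact Submodule.smul_mem _ _ (hkj ▸ hEC k)
    · simp [blockDiagPart, hkj]
  rw [← sub_eq_zero]
  ext i j
  exact congrFun (Submodule.disjoint_def.mp (hC (b j)) _
    (strictBlockTriangular_iff_col_mem.mp hX j) (hXC j)) i

end Filtration

/-- A semisimple blockwise upper triangular representation
`ρ : Γ →* GL_n(K)` is conjugate, by a strictly-upper block unipotent matrix `u`, to its
blockwise diagonal part: `u ρ(γ) u⁻¹ = D(ρ(γ))` for all `γ`. -/
theorem stmt10 {K : Type*} [Field K] {n : ℕ} (b : Fin n → ℕ)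
    {Γ : Type*} [Group Γ]
    (ρ : Γ →* Matrix.GeneralLinearGroup (Fin n) K)
    (hρ : ∀ γ : Γ, ∀ i j, b j < b i → (ρ γ : Matrix (Fin n) (Fin n) K) i j = 0)
    (hss : ∀ W : Submodule K (Fin n → K),
      (∀ γ : Γ, ∀ w ∈ W, (ρ γ : Matrix (Fin n) (Fin n) K) *ᵥ w ∈ W) →
      ∃ W' : Submodule K (Fin n → K),
        (∀ γ : Γ, ∀ w ∈ W', (ρ γ : Matrix (Fin n) (Fin n) K) *ᵥ w ∈ W') ∧ IsCompl W W') :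
    ∃ u : Matrix.GeneralLinearGroup (Fin n) K,
      IsStrictUpperUnip b (u : Matrix (Fin n) (Fin n) K) ∧
      ∀ γ : Γ, ∀ i j,
        ((u : Matrix (Fin n) (Fin n) K) * (ρ γ : Matrix (Fin n) (Fin n) K) *
          ((u⁻¹ : Matrix.GeneralLinearGroup (Fin n) K) : Matrix (Fin n) (Fin n) K)) i j =
        if b i = b j then (ρ γ : Matrix (Fin n) (Fin n) K) i j else 0 := by
  have hρ_block (γ : Γ) : (ρ γ : Matrix (Fin n) (Fin n) K).BlockTriangular b :=
    fun i j => hρ γ i j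
  choose C hCinv hC using fun t => hss (blockFiltration K b t) fun γ _ hv =>
    (hρ_block γ).mulVec_mem_blockFiltration hv
  obtain ⟨E, hE, hEC⟩ := exists_strictBlockTriangular_col_one_add_mem fun t => (hC t).codisjoint
  have hW := hE.isUnit_one_add
  refine ⟨hW.unit⁻¹, ?_, fun γ i j => ?_⟩
  · rw [coe_units_inv, hW.unit_spec, ← add_sub_cancel 1 (1 + E)⁻¹]
    exact hE.inv_one_add_sub_one.isStrictUpperUnip_one_add
  · rw [inv_inv, coe_units_inv, hW.unit_spec, mul_assoc,
      mul_one_add_eq_one_add_mul_blockDiagPart (fun t => (hC t).disjoint) hE hEC (hρ_block γ)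
        (fun t => hCinv t γ),
      nonsing_inv_mul_cancel_left _ _ ((isUnit_iff_isUnit_det _).mp hW)]
    rfl
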